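/- arXiv:2101.03316 — 4 statements merged into one kernel-verified Lean document; each statement's English description precedes it below -/
import Mathlib

section
/- If (x, y, z) is a Markov triple with x ≤ y ≤ z and (x, y, z) ≠ (1, 1, 1), then 3xy < 2z, i.e. the Vieta flip 3xy − z is strictly smaller than z. -/
/-! If `3xy ≥ 2z`, the other root `z' = 3xy - z` of the Markov equation in `z` satisfies
`y ≤ z ≤ z'`, so `(z - y)(z' - y) ≥ 0`. Since `z + z' = 3xy` and `z z' = x² + y²`, this reads
`3xy² ≤ x² + 2y²`, which for `0 < x ≤ y` forces `x = y = 1`, and then `2z ≤ 3` gives `z = 1`. -/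

namespace Markov

theorem mul_vieta_flip_eq {x y z : ℤ} (h : x ^ 2 + y ^ 2 + z ^ 2 = 3 * x * y * z) :
    z * (3 * x * y - z) = x ^ 2 + y ^ 2 := by
  linear_combination -h

theorem three_mul_mul_sq_le_of_le_vieta_flip {x y z : ℤ}
    (h : x ^ 2 + y ^ 2 + z ^ 2 = 3 * x * y * z) (hyz : y ≤ z) (hyz' : y ≤ 3 * x * y - z) :
    3 * x * y ^ 2 ≤ x ^ 2 + 2 * y ^ 2 := by
  have hprod : 0 ≤ (z - y) * (3 * x * y - z - y) := mul_nonneg (by omega) (by omega)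
  linear_combination hprod + mul_vieta_flip_eq h

theorem eq_one_of_three_mul_mul_sq_le {x y : ℤ} (hx : 0 < x) (hxy : x ≤ y)
    (h : 3 * x * y ^ 2 ≤ x ^ 2 + 2 * y ^ 2) : x = 1 ∧ y = 1 := by
  have hy : 0 < y := hx.trans_le hxy
  have hx1 : x = 1 := by
    have hsq : x ^ 2 ≤ y ^ 2 := pow_le_pow_left₀ hx.le hxy 2
    have : x * y ^ 2 ≤ 1 * y ^ 2 := by linarith
    have := le_of_mul_le_mul_right this (by positivity)
    omega
  subst hx1
  refine ⟨rfl, ?_⟩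
  nlinarith

end Markov

theorem stmt_1_general (x y z : ℤ) (hx : 0 < x)
    (h : x ^ 2 + y ^ 2 + z ^ 2 = 3 * x * y * z)
    (hxy : x ≤ y) (hyz : y ≤ z) (hne : (x, y, z) ≠ (1, 1, 1)) :
    3 * x * y < 2 * z := by
  by_contra! hflip
  obtain ⟨rfl, rfl⟩ := Markov.eq_one_of_three_mul_mul_sq_le hx hxy
    (Markov.three_mul_mul_sq_le_of_le_vieta_flip h hyz (by omega))
  obtain rfl : z = 1 := by omega
  exact hne rfl

/-- If (x,y,z) is a Markov triple with x ≤ y ≤ z and (x,y,z) ≠ (1,1,1),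
then 3xy < 2z, i.e. the Vieta flip 3xy − z is strictly smaller than z. -/
theorem stmt_1 (x y z : ℤ) (hx : 0 < x) (hy : 0 < y) (hz : 0 < z)
    (h : x ^ 2 + y ^ 2 + z ^ 2 = 3 * x * y * z)
    (hxy : x ≤ y) (hyz : y ≤ z) (hne : (x, y, z) ≠ (1, 1, 1)) :
    3 * x * y < 2 * z :=
  stmt_1_general x y z hx h hxy hyz hne
end

section
/- Every Markov triple can be obtained from (1, 1, 1) by a finite sequence of coordinate permutations and Vieta flips (x, y, z) ↦ (x, y, 3xy − z). -/
/-!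
Reduction theory. For a positive solution of `x² + y² + z² = 3xyz` with `z` its largest
coordinate, `z` and `z' = 3xy - z` are the two roots of `t² - 3xy t + x² + y²`; since
`z z' = x² + y² > 0` the flipped triple is again positive, and unless the triple is
`(1, 1, 1)` the root `z'` is smaller than `z`. Permutations keep the sum `x + y + z`, so
repeatedly moving the largest coordinate to the last place and flipping it descends to
`(1, 1, 1)`; the moves are involutive, so the path can be reversed.
-/

/-- One step of the Markov moves: a coordinate permutation (generated by the
two adjacent transpositions) or the Vieta flip (x,y,z) ↦ (x,y,3xy−z). -/
def MarkovMove (t s : ℤ × ℤ × ℤ) : Prop :=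
  s = (t.2.1, t.1, t.2.2) ∨
  s = (t.1, t.2.2, t.2.1) ∨
  s = (t.1, t.2.1, 3 * t.1 * t.2.1 - t.2.2)

open Relation

def IsMarkovTriple (x y z : ℤ) : Prop :=
  0 < x ∧ 0 < y ∧ 0 < z ∧ x ^ 2 + y ^ 2 + z ^ 2 = 3 * x * y * z

namespace MarkovMove

lemma swap₁₂ (x y z : ℤ) : MarkovMove (x, y, z) (y, x, z) := .inl rfl

lemma swap₂₃ (x y z : ℤ) : MarkovMove (x, y, z) (x, z, y) := .inr <| .inl rfl

lemma vieta (x y z : ℤ) : MarkovMove (x, y, z) (x, y, 3 * x * y - z) := .inr <| .inr rfl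

instance : Std.Symm MarkovMove where
  symm := by
    rintro ⟨x, y, z⟩ _ (rfl | rfl | rfl)
    · exact swap₁₂ y x z
    · exact swap₂₃ x z y
    · simpa using vieta x y (3 * x * y - z)

end MarkovMove

namespace IsMarkovTriple

variable {x y z : ℤ}

lemma swap₁₂ (h : IsMarkovTriple x y z) : IsMarkovTriple y x z := by
  obtain ⟨hx, hy, hz, h⟩ := h
  exact ⟨hy, hx, hz, by linear_combination h⟩

lemma swap₂₃ (h : IsMarkovTriple x y z) : IsMarkovTriple x z y := by
  obtain ⟨hx, hy, hz, h⟩ := h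
  exact ⟨hx, hz, hy, by linear_combination h⟩

lemma vieta (h : IsMarkovTriple x y z) : IsMarkovTriple x y (3 * x * y - z) := by
  obtain ⟨hx, hy, hz, h⟩ := h
  have hprod : z * (3 * x * y - z) = x ^ 2 + y ^ 2 := by linear_combination -h
  refine ⟨hx, hy, pos_of_mul_pos_right (hprod ▸ by positivity) hz.le, by linear_combination h⟩

lemma vieta_lt (h : IsMarkovTriple x y z) (hxz : x ≤ z) (hyz : y ≤ z) (hz : 2 ≤ z) :
    3 * x * y - z < z := by
  wlog hxy : x ≤ y generalizing x y
  · simpa [mul_right_comm] using this h.swap₁₂ hyz hxz (le_of_not_ge hxy)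
  obtain ⟨hx, hy, -, h⟩ := h
  by_cases hxy₁ : x = 1 ∧ y = 1
  · obtain ⟨rfl, rfl⟩ := hxy₁
    have : (z - 1) * (z - 2) = 0 := by linear_combination h
    rcases mul_eq_zero.1 this with _ | _ <;> omega
  -- `y` lies strictly between the two roots `z` and `3xy - z` of `t ^ 2 - 3xy t + x ^ 2 + y ^ 2`.
  have hneg : x ^ 2 + 2 * y ^ 2 - 3 * x * y ^ 2 < 0 := by
    rcases eq_or_lt_of_le (show 1 ≤ x by omega) with rfl | hx₂
    · nlinarith [show 2 ≤ y by omega]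
    · nlinarith [mul_le_mul hxy hxy hx.le hy.le, mul_le_mul_of_nonneg_right hx₂ (sq_nonneg y)]
  have hroots : (z - y) * (3 * x * y - z - y) = x ^ 2 + 2 * y ^ 2 - 3 * x * y ^ 2 := by
    linear_combination -h
  nlinarith

lemma reflTransGen_one_of_max_last (h : IsMarkovTriple x y z) (hxz : x ≤ z) (hyz : y ≤ z)
    (ih : ∀ a b c, IsMarkovTriple a b c → a + b + c < x + y + z →
      ReflTransGen MarkovMove (a, b, c) (1, 1, 1)) :
    ReflTransGen MarkovMove (x, y, z) (1, 1, 1) := by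
  have ⟨hx, hy, hz, _⟩ := h
  by_cases hz₁ : z = 1
  · obtain ⟨rfl, rfl, rfl⟩ : x = 1 ∧ y = 1 ∧ z = 1 := by omega
    exact .refl
  have hlt := h.vieta_lt hxz hyz (by omega)
  exact .head (MarkovMove.vieta x y z) (ih _ _ _ h.vieta (by linarith))

theorem reflTransGen_one {x y z : ℤ} (h : IsMarkovTriple x y z) :
    ReflTransGen MarkovMove (x, y, z) (1, 1, 1) := by
  have ih : ∀ a b c, IsMarkovTriple a b c → a + b + c < x + y + z →
      ReflTransGen MarkovMove (a, b, c) (1, 1, 1) := fun a b c hm _ => reflTransGen_one hm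
  by_cases hzmax : x ≤ z ∧ y ≤ z
  · exact h.reflTransGen_one_of_max_last hzmax.1 hzmax.2 ih
  by_cases hymax : x ≤ y
  · exact .head (MarkovMove.swap₂₃ x y z) <| h.swap₂₃.reflTransGen_one_of_max_last hymax
      (by omega) fun a b c hm hlt => ih a b c hm (by linarith)
  · exact .head (MarkovMove.swap₁₂ x y z) <| .head (MarkovMove.swap₂₃ y x z) <|
      h.swap₁₂.swap₂₃.reflTransGen_one_of_max_last (by omega) (by omega)
        fun a b c hm hlt => ih a b c hm (by linarith)
termination_by (x + y + z).toNat
decreasing_by obtain ⟨_, _, _, _⟩ := hm; omega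

end IsMarkovTriple

/-- Every Markov triple is obtained from (1,1,1) by a finite sequence of
coordinate permutations and Vieta flips. -/
theorem stmt_7 (x y z : ℤ) (hx : 0 < x) (hy : 0 < y) (hz : 0 < z)
    (h : x ^ 2 + y ^ 2 + z ^ 2 = 3 * x * y * z) :
    Relation.ReflTransGen MarkovMove (1, 1, 1) (x, y, z) :=
  Std.Symm.symm _ _ (IsMarkovTriple.reflTransGen_one ⟨hx, hy, hz, h⟩)
end

section
/- For every R ≥ 3, the number of Markov triples (x, y, z) with max(x, y, z) ≤ R is finite, and in fact at most C·(log R)² for some absolute constant C. -/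
/-!
Sorting a Markov triple costs a factor `3! = 6`, and apart from `(1, 1, 1)` every sorted triple
`x ≤ y ≤ z` lies in the Markov tree: the Vieta move `z ↦ 3xy - z` strictly decreases the triple
down to the root `(1, 1, 2)`. Labelling the root `(1, 1)` and the children of a node labelled
`(a, b)` by `(b, a + b)` and `(a, a + b)` gives every node a label with `2 ^ (a + b) ≤ 2z`,
because `z ≥ 2xy` along the tree. Euclid's algorithm run backwards reconstructs a node from its
label, so the sorted triples with `z ≤ R` are covered by the `O((log R) ^ 2)` labels with
`a + b ≤ 3 log R`.
-/

open Real Finset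

namespace Markov

/-- The node of the Markov tree with label `(a, b)`, rebuilt by Euclid's algorithm. -/
def tree (a b : ℕ) : ℤ × ℤ × ℤ :=
  if h : 0 < a ∧ a < b then
    if b - a < a then
      let t := tree (b - a) a
      (t.2.1, t.2.2, 3 * t.2.1 * t.2.2 - t.1)
    else
      let t := tree a (b - a)
      (t.1, t.2.2, 3 * t.1 * t.2.2 - t.2.1)
  else (1, 1, 2)
termination_by b
decreasing_by all_goals omega

theorem tree_self (a : ℕ) : tree a a = (1, 1, 2) := by
  rw [tree, dif_neg (by omega)]

variable {a b : ℕ} {x y z : ℤ}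

theorem tree_add_left (ha : 0 < a) (hab : a ≤ b) (ht : tree a b = (x, y, z)) :
    tree b (a + b) = (y, z, 3 * y * z - x) := by
  rw [tree, dif_pos (by omega)]
  rcases hab.lt_or_eq with hab | rfl
  · rw [if_pos (by omega), Nat.add_sub_cancel, ht]
  · -- both moves send the root `(1, 1, 2)` to `(1, 2, 5)`
    rw [tree_self] at ht
    cases ht
    rw [if_neg (by omega), Nat.add_sub_cancel, tree_self]

theorem tree_add_right (ha : 0 < a) (hab : a ≤ b) (ht : tree a b = (x, y, z)) :
    tree a (a + b) = (x, z, 3 * x * z - y) := by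
  rw [tree, dif_pos (by omega), if_neg (by omega), Nat.add_sub_cancel_left, ht]

theorem two_pow_add_le_of_le_mul {w : ℤ} (hx : 2 ^ a ≤ 2 * x) (hy : 2 ^ b ≤ 2 * y)
    (hw : w ≤ x * y) : 2 ^ (a + b) ≤ 2 * (3 * x * y - w) := by
  have hx0 : 0 ≤ 2 * x := le_trans (by positivity) hx
  calc (2 : ℤ) ^ (a + b) = 2 ^ a * 2 ^ b := pow_add _ _ _
    _ ≤ (2 * x) * (2 * y) := mul_le_mul hx hy (by positivity) hx0
    _ ≤ 2 * (3 * x * y - w) := by linarith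

theorem eq_one_one_two (hx : 0 < x) (hxy : x ≤ y) (hy : y ≤ 1) (hz : 2 ≤ z)
    (hm : x ^ 2 + y ^ 2 + z ^ 2 = 3 * x * y * z) : x = 1 ∧ y = 1 ∧ z = 2 := by
  obtain ⟨rfl, rfl⟩ : x = 1 ∧ y = 1 := by omega
  refine ⟨rfl, rfl, ?_⟩
  nlinarith

theorem vieta_involution_pos_lt (hx : 0 < x) (hxy : x ≤ y) (hyz : y ≤ z) (hy : 2 ≤ y)
    (hm : x ^ 2 + y ^ 2 + z ^ 2 = 3 * x * y * z) : 0 < 3 * x * y - z ∧ 3 * x * y - z < y := by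
  have hprod : (3 * x * y - z) * z = x ^ 2 + y ^ 2 := by linear_combination -hm
  constructor
  · nlinarith
  · by_contra! h
    nlinarith [mul_nonneg (sub_nonneg.2 hyz) (sub_nonneg.2 h)]

theorem exists_tree_eq {x y z : ℤ} (hx : 0 < x) (hxy : x ≤ y) (hyz : y ≤ z) (hz : 2 ≤ z)
    (hm : x ^ 2 + y ^ 2 + z ^ 2 = 3 * x * y * z) :
    ∃ a b : ℕ, 0 < a ∧ a ≤ b ∧ tree a b = (x, y, z) ∧
      2 ^ a ≤ 2 * x ∧ 2 ^ b ≤ 2 * y ∧ 2 ^ (a + b) ≤ 2 * z := by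
  rcases le_or_gt y 1 with hy | hy
  · obtain ⟨rfl, rfl, rfl⟩ := eq_one_one_two hx hxy hy hz hm
    exact ⟨1, 1, one_pos, le_rfl, tree_self 1, by norm_num⟩
  obtain ⟨hw, hwy⟩ := vieta_involution_pos_lt hx hxy hyz hy hm
  obtain ⟨w, rfl⟩ : ∃ w, z = 3 * x * y - w := ⟨3 * x * y - z, by ring⟩
  simp only [sub_sub_cancel] at hw hwy
  have hwxy : w ≤ x * y := by nlinarith
  rcases le_total w x with hwx | hxw
  · obtain ⟨a, b, ha, hab, ht, h2a, h2b, h2ab⟩ :=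
      exists_tree_eq hw hwx hxy (by omega) (by linear_combination hm)
    exact ⟨b, a + b, by omega, by omega, tree_add_left ha hab ht, h2b, h2ab,
      two_pow_add_le_of_le_mul h2b h2ab hwxy⟩
  · obtain ⟨a, b, ha, hab, ht, h2a, h2b, h2ab⟩ :=
      exists_tree_eq hx hxw hwy.le (by omega) (by linear_combination hm)
    exact ⟨a, a + b, ha, by omega, tree_add_right ha hab ht, h2a, h2ab,
      two_pow_add_le_of_le_mul h2a h2ab hwxy⟩
termination_by (x + y + z).toNat
decreasing_by all_goals omega

theorem one_le_log_of_three_le {R : ℝ} (hR : 3 ≤ R) : 1 ≤ log R := by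
  rw [le_log_iff_exp_le (by linarith)]
  linarith [exp_one_lt_d9]

theorem le_three_mul_log {k : ℕ} {R : ℝ} (hR : 3 ≤ R) (hk : (2 : ℝ) ^ k ≤ 2 * R) :
    (k : ℝ) ≤ 3 * log R := by
  have hklog : k * log 2 ≤ log 2 + log R := by
    have := log_le_log (by positivity) hk
    rwa [log_pow, log_mul two_ne_zero (by linarith)] at this
  nlinarith [one_le_log_of_three_le hR, log_two_gt_d9]

theorem exists_tree_eq_of_le {R : ℝ} (hR : 3 ≤ R) (hx : 0 < x) (hxy : x ≤ y) (hyz : y ≤ z)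
    (hz : 2 ≤ z) (hzR : (z : ℝ) ≤ R) (hm : x ^ 2 + y ^ 2 + z ^ 2 = 3 * x * y * z) :
    ∃ a ∈ Icc 1 ⌊3 * log R⌋₊, ∃ b ∈ Icc 1 ⌊3 * log R⌋₊, tree a b = (x, y, z) := by
  obtain ⟨a, b, ha, hab, ht, -, -, h2ab⟩ := exists_tree_eq hx hxy hyz hz hm
  have hlog : ((a + b : ℕ) : ℝ) ≤ 3 * log R := le_three_mul_log hR <| by
    calc (2 : ℝ) ^ (a + b) = ((2 ^ (a + b) : ℤ) : ℝ) := by push_cast; rfl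
      _ ≤ 2 * z := by exact_mod_cast h2ab
      _ ≤ 2 * R := by linarith
  have hn : a + b ≤ ⌊3 * log R⌋₊ := Nat.le_floor hlog
  exact ⟨a, mem_Icc.2 ⟨ha, by omega⟩, b, mem_Icc.2 ⟨by omega, by omega⟩, ht⟩

def toVec (t : ℤ × ℤ × ℤ) : Fin 3 → ℤ := ![t.1, t.2.1, t.2.2]

def ofVec (v : Fin 3 → ℤ) : ℤ × ℤ × ℤ := (v 0, v 1, v 2)

theorem toVec_ofVec (v : Fin 3 → ℤ) : toVec (ofVec v) = v := by
  ext i; fin_cases i <;> rfl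

def IsTriple (v : Fin 3 → ℤ) : Prop := (∀ i, 0 < v i) ∧ ∑ i, v i ^ 2 = 3 * ∏ i, v i

theorem isTriple_comp_perm {v : Fin 3 → ℤ} (σ : Equiv.Perm (Fin 3)) :
    IsTriple (v ∘ σ) ↔ IsTriple v := by
  simp only [IsTriple, Function.comp_apply, Equiv.forall_congr_right σ (q := fun i => 0 < v i),
    Equiv.sum_comp σ (fun i => v i ^ 2), Equiv.prod_comp σ v]

theorem isTriple_toVec : IsTriple (toVec (x, y, z)) ↔
    0 < x ∧ 0 < y ∧ 0 < z ∧ x ^ 2 + y ^ 2 + z ^ 2 = 3 * x * y * z := by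
  simp [IsTriple, toVec, Fin.forall_fin_succ, Fin.sum_univ_three, Fin.prod_univ_three, mul_assoc,
    and_assoc]

def markovTriples (R : ℝ) : Set (ℤ × ℤ × ℤ) :=
  {t : ℤ × ℤ × ℤ | 0 < t.1 ∧ 0 < t.2.1 ∧ 0 < t.2.2 ∧
        t.1 ^ 2 + t.2.1 ^ 2 + t.2.2 ^ 2 = 3 * t.1 * t.2.1 * t.2.2 ∧
        (max (max t.1 t.2.1) t.2.2 : ℝ) ≤ R}

theorem mem_markovTriples {R : ℝ} {t : ℤ × ℤ × ℤ} :
    t ∈ markovTriples R ↔ IsTriple (toVec t) ∧ ∀ i, (toVec t i : ℝ) ≤ R := by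
  obtain ⟨x, y, z⟩ := t
  rw [isTriple_toVec]
  simp [markovTriples, Fin.forall_fin_succ, toVec, and_assoc]

def treeRearrangements (n : ℕ) : Finset (ℤ × ℤ × ℤ) :=
  (univ ×ˢ (Icc 1 n ×ˢ Icc 1 n)).image fun p : Equiv.Perm (Fin 3) × ℕ × ℕ =>
    ofVec (toVec (tree p.2.1 p.2.2) ∘ p.1)

theorem card_treeRearrangements_le (n : ℕ) : #(treeRearrangements n) ≤ 6 * n ^ 2 := by
  refine card_image_le.trans_eq ?_
  simp [card_product, Fintype.card_perm, Nat.factorial, sq]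

theorem markovTriples_subset {R : ℝ} (hR : 3 ≤ R) :
    markovTriples R ⊆ insert (1, 1, 1) ↑(treeRearrangements ⌊3 * log R⌋₊) := by
  intro t ht
  obtain ⟨hmarkov, htR⟩ := mem_markovTriples.1 ht
  set σ := Tuple.sort (toVec t)
  set u := toVec t ∘ σ
  have hmono : Monotone u := Tuple.monotone_sort _
  have hu : IsTriple (toVec (ofVec u)) := by
    rw [toVec_ofVec]; exact (isTriple_comp_perm σ).2 hmarkov
  obtain ⟨hpos, -, -, hm⟩ := isTriple_toVec.1 hu
  have ht_eq : toVec t = u ∘ ⇑σ⁻¹ := by ext i; simp [u]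
  rcases le_or_gt (u 2) 1 with hu1 | hu2
  · left
    have h1 : ∀ i, toVec t i = 1 := fun i => by
      have := hmono (show σ⁻¹ i ≤ 2 from Fin.le_last _)
      have := hmarkov.1 i
      simp only [ht_eq, Function.comp_apply] at *
      omega
    exact Prod.ext (h1 0) (Prod.ext (h1 1) (h1 2))
  · right
    obtain ⟨a, ha, b, hb, htree⟩ := exists_tree_eq_of_le hR hpos (hmono (by decide))
      (hmono (by decide)) hu2 (htR (σ 2)) hm
    refine mem_image.2 ⟨(σ⁻¹, a, b), mem_product.2 ⟨mem_univ _, mem_product.2 ⟨ha, hb⟩⟩, ?_⟩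
    change ofVec (toVec (tree a b) ∘ ⇑σ⁻¹) = ofVec (toVec t)
    rw [htree, ht_eq]
    exact congrArg (fun v => ofVec (v ∘ ⇑σ⁻¹)) (toVec_ofVec u)

theorem ncard_markovTriples_le {R : ℝ} (hR : 3 ≤ R) :
    (markovTriples R).ncard ≤ 1 + 6 * ⌊3 * log R⌋₊ ^ 2 := by
  calc (markovTriples R).ncard
      ≤ (insert (1, 1, 1) ↑(treeRearrangements ⌊3 * log R⌋₊) : Set (ℤ × ℤ × ℤ)).ncard :=
        Set.ncard_le_ncard (markovTriples_subset hR) ((finite_toSet _).insert _)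
    _ ≤ #(treeRearrangements ⌊3 * log R⌋₊) + 1 := by
        rw [← Set.ncard_coe_finset]; exact Set.ncard_insert_le _ _
    _ ≤ 1 + 6 * ⌊3 * log R⌋₊ ^ 2 := by linarith [card_treeRearrangements_le ⌊3 * log R⌋₊]

end Markov

open Markov in
/-- For every R ≥ 3 the set of Markov triples with sup-norm at most R is
finite, of cardinality at most C·(log R)² for an absolute constant C. -/
theorem stmt_16 :
    ∃ C : ℝ, 0 < C ∧ ∀ R : ℝ, 3 ≤ R →
      {t : ℤ × ℤ × ℤ | 0 < t.1 ∧ 0 < t.2.1 ∧ 0 < t.2.2 ∧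
        t.1 ^ 2 + t.2.1 ^ 2 + t.2.2 ^ 2 = 3 * t.1 * t.2.1 * t.2.2 ∧
        (max (max t.1 t.2.1) t.2.2 : ℝ) ≤ R}.Finite ∧
      ({t : ℤ × ℤ × ℤ | 0 < t.1 ∧ 0 < t.2.1 ∧ 0 < t.2.2 ∧
        t.1 ^ 2 + t.2.1 ^ 2 + t.2.2 ^ 2 = 3 * t.1 * t.2.1 * t.2.2 ∧
        (max (max t.1 t.2.1) t.2.2 : ℝ) ≤ R}.ncard : ℝ) ≤ C * Real.log R ^ 2 := by
  refine ⟨55, by norm_num, fun R hR => ⟨?_, ?_⟩⟩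
  · exact ((finite_toSet _).insert _).subset (markovTriples_subset hR)
  · have hlog := one_le_log_of_three_le hR
    have hn : (⌊3 * log R⌋₊ : ℝ) ≤ 3 * log R := Nat.floor_le (by linarith)
    calc ((markovTriples R).ncard : ℝ) ≤ ((1 + 6 * ⌊3 * log R⌋₊ ^ 2 : ℕ) : ℝ) := by
          exact_mod_cast ncard_markovTriples_le hR
      _ ≤ 55 * log R ^ 2 := by push_cast; nlinarith
end

section
/- Let B ⊂ ℝ² be a compact convex set with nonempty interior that is symmetric under (x, y) ↦ (y, x), and let (q, p) be a boundary point of B with 0 ≤ p < q. Then for every i > 0, the point (q + i, p) does not belong to B. -/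
/-!
The point `(q, p)` lies strictly inside the triangle with vertices `0`, `(q + i, p)` and its
mirror image `(p, q + i)`: the ray from `0` through `(q, p)` meets the edge joining the last two
vertices beyond `(q, p)`. If `(q + i, p)` were in `B`, this whole triangle would lie in `B` with `0`
an interior point, so `(q, p)` would be interior to `B` rather than on its frontier.
-/

theorem Convex.smul_mem_interior_of_zero_mem_interior {E : Type*} [AddCommGroup E] [Module ℝ E]
    [TopologicalSpace E] [IsTopologicalAddGroup E] [ContinuousSMul ℝ E] {s : Set E}
    (hs : Convex ℝ s) (h0 : (0 : E) ∈ interior s) {x : E} (hx : x ∈ s) {t : ℝ}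
    (ht₀ : 0 ≤ t) (ht₁ : t < 1) : t • x ∈ interior s := by
  simpa using hs.combo_interior_self_mem_interior h0 hx (sub_pos.2 ht₁) ht₀ (sub_add_cancel 1 t)

theorem smul_mk_mem_segment_swap {p q i : ℝ} (hp : 0 ≤ p) (hpq : p < q) (hi : 0 < i) :
    ((q + p + i) / (q + p)) • (q, p) ∈ segment ℝ (q + i, p) (p, q + i) := by
  have hqp : 0 < q + p := by linarith
  have hqip : 0 < q + i - p := by linarith
  have hd : 0 < (q + p) * (q + i - p) := mul_pos hqp hqip
  set b := p * i / ((q + p) * (q + i - p)) with hb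
  have hb₀ : 0 ≤ b := by positivity
  have hb₁ : b ≤ 1 := by
    rw [div_le_one hd]
    nlinarith
  refine ⟨1 - b, b, sub_nonneg.2 hb₁, hb₀, sub_add_cancel 1 b, ?_⟩
  ext <;> simp only [Prod.smul_mk, Prod.fst_add, Prod.snd_add, smul_eq_mul, hb] <;>
    field_simp [hqip.ne'] <;> ring

theorem stmt_19_general (B : Set (ℝ × ℝ)) (hconv : Convex ℝ B)
    (h0 : (0 : ℝ × ℝ) ∈ interior B)
    (hsym : ∀ v : ℝ × ℝ, v ∈ B → (v.2, v.1) ∈ B)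
    (p q : ℝ) (hp : 0 ≤ p) (hpq : p < q) (hbd : (q, p) ∈ frontier B) :
    ∀ i : ℝ, 0 < i → (q + i, p) ∉ B := by
  intro i hi hmem
  have hqp : 0 < q + p := by linarith
  have hz : ((q + p + i) / (q + p)) • (q, p) ∈ B :=
    hconv.segment_subset hmem (hsym _ hmem) (smul_mk_mem_segment_swap hp hpq hi)
  have hint := hconv.smul_mem_interior_of_zero_mem_interior h0 hz
    (t := (q + p) / (q + p + i)) (by positivity) ((div_lt_one (by linarith)).2 (by linarith))
  have hcancel : (q + p) / (q + p + i) * ((q + p + i) / (q + p)) = 1 := by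
    field_simp
  rw [smul_smul, hcancel, one_smul] at hint
  exact hbd.2 hint

/-- Let B ⊂ ℝ² be a compact convex set containing a neighbourhood of 0 that is
symmetric under (x,y) ↦ (y,x), and let (q,p) be a boundary point of B with
0 ≤ p < q.  Then for every i > 0 the point (q+i, p) is not in B. -/
theorem stmt_19 (B : Set (ℝ × ℝ)) (hcomp : IsCompact B) (hconv : Convex ℝ B)
    (h0 : (0 : ℝ × ℝ) ∈ interior B)
    (hsym : ∀ v : ℝ × ℝ, v ∈ B → (v.2, v.1) ∈ B)
    (p q : ℝ) (hp : 0 ≤ p) (hpq : p < q) (hbd : (q, p) ∈ frontier B) :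
    ∀ i : ℝ, 0 < i → (q + i, p) ∉ B :=
  stmt_19_general B hconv h0 hsym p q hp hpq hbd
end
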